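/- arXiv:0802.1266 — 4 statements merged into one kernel-verified Lean document; each statement's English description precedes it below -/
import Mathlib

section
/- Let m, n, u, v be integers and p a prime with 0 < m < n, gcd(m, n) = 1, gcd(p, n) = 1 and u ≤ v. For each positive integer i, let k_i be the unique integer with 1 ≤ k_i ≤ p^i and k_i·n ≡ m (mod p^i). Then the p-adic valuation of the product ∏_{j=u}^{v} (nj − m) equals Σ_{i=1}^{∞} (⌊(v − k_i)/p^i⌋ − ⌊(u − 1 − k_i)/p^i⌋), and this also equals Σ_{i=1}^{∞} (⌊(−u + k_i)/p^i⌋ − ⌊(−v − 1 + k_i)/p^i⌋). -/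
/-!
Since `n` is invertible modulo `p^i`, the factor `n j - m` is divisible by `p^i` exactly when
`j ≡ k_i (mod p^i)`. The number of such `j` in `[u, v]` is the `i`-th summand of the first sum,
and, after the reflection `j ↦ -j`, also that of the second. Summing over `i` the number of
factors divisible by `p^i` counts every factor `p^e ∥ n j - m` exactly `e` times, which gives
the valuation of the product.
-/

open Finset

namespace Int

theorem dvd_mul_sub_iff_modEq {q n m k j : ℤ} (hqn : IsCoprime q n)
    (hk : k * n ≡ m [ZMOD q]) : q ∣ n * j - m ↔ j ≡ k [ZMOD q] := by
  have e : n * j - m = n * (j - k) + (k * n - m) := by ring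
  rw [e, dvd_add_left hk.symm.dvd, Int.modEq_iff_dvd, dvd_sub_comm]
  exact ⟨hqn.dvd_of_dvd_mul_left, fun h => h.mul_left n⟩

theorem card_Icc_filter_modEq {u v q : ℤ} (k : ℤ) (hq : 0 < q) (huv : u ≤ v + 1) :
    (#{j ∈ Icc u v | j ≡ k [ZMOD q]} : ℤ) = ⌊((v : ℚ) - k) / q⌋ - ⌊((u : ℚ) - 1 - k) / q⌋ := by
  rw [← Ioc_sub_one_left_eq_Icc, Int.Ioc_filter_modEq_card _ _ hq, max_eq_left]
  · push_cast; rfl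
  · refine sub_nonneg.2 (Int.floor_mono (div_le_div_of_nonneg_right ?_ (by positivity)))
    have : (u : ℚ) ≤ v + 1 := by exact_mod_cast huv
    push_cast
    linarith

theorem card_Icc_filter_modEq_neg (u v q k : ℤ) :
    #{j ∈ Icc u v | j ≡ k [ZMOD q]} = #{j ∈ Icc (-v) (-u) | j ≡ -k [ZMOD q]} := by
  refine card_nbij' Neg.neg Neg.neg ?_ ?_ (fun j _ => neg_neg j) (fun j _ => neg_neg j)
  · intro j hj
    simp only [coe_filter, mem_Icc, Set.mem_ofPred_eq, Int.neg_modEq_neg] at hj ⊢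
    exact ⟨⟨by omega, by omega⟩, hj.2⟩
  · intro j hj
    simp only [coe_filter, mem_Icc, Set.mem_ofPred_eq] at hj ⊢
    exact ⟨⟨by omega, by omega⟩, by simpa using Int.neg_modEq_neg.2 hj.2⟩

end Int

section padicValInt

variable {p : ℕ} [Fact p.Prime]

theorem padicValInt_prod {ι : Type*} (s : Finset ι) {f : ι → ℤ} (hf : ∀ i ∈ s, f i ≠ 0) :
    padicValInt p (∏ i ∈ s, f i) = ∑ i ∈ s, padicValInt p (f i) := by
  induction s using Finset.cons_induction with
  | empty => simp
  | cons a s _ ih =>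
    rw [prod_cons, sum_cons, padicValInt.mul (hf a (mem_cons_self a s))
      (prod_ne_zero_iff.2 fun i hi => hf i (mem_cons_of_mem hi)),
      ih fun i hi => hf i (mem_cons_of_mem hi)]

theorem pow_succ_dvd_iff_lt_padicValInt {x : ℤ} (hx : x ≠ 0) (i : ℕ) :
    (p : ℤ) ^ (i + 1) ∣ x ↔ i < padicValInt p x := by
  rw [padicValInt_dvd_iff, or_iff_right hx, Nat.succ_le_iff]

theorem padicValInt_eq_card_pow_succ_dvd {x : ℤ} (hx : x ≠ 0) {B : ℕ}
    (hB : padicValInt p x ≤ B) :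
    padicValInt p x = #{i ∈ range B | (p : ℤ) ^ (i + 1) ∣ x} := by
  simp_rw [pow_succ_dvd_iff_lt_padicValInt hx]
  conv_lhs => rw [← card_range (padicValInt p x)]
  congr 1
  ext i
  simp only [mem_filter, mem_range]
  omega

theorem padicValInt_prod_eq_sum_card {ι : Type*} (s : Finset ι) {f : ι → ℤ}
    (hf : ∀ i ∈ s, f i ≠ 0) {B : ℕ} (hB : padicValInt p (∏ i ∈ s, f i) ≤ B) :
    padicValInt p (∏ i ∈ s, f i) = ∑ e ∈ range B, #{i ∈ s | (p : ℤ) ^ (e + 1) ∣ f i} := by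
  rw [padicValInt_prod s hf] at hB ⊢
  calc ∑ i ∈ s, padicValInt p (f i)
      = ∑ i ∈ s, #{e ∈ range B | (p : ℤ) ^ (e + 1) ∣ f i} :=
        sum_congr rfl fun i hi => padicValInt_eq_card_pow_succ_dvd (hf i hi)
          ((single_le_sum (fun _ _ => Nat.zero_le _) hi).trans hB)
    _ = _ := sum_card_bipartiteAbove_eq_sum_card_bipartiteBelow _

theorem padicValInt_prod_eq_tsum_card {ι : Type*} (s : Finset ι) {f : ι → ℤ}
    (hf : ∀ i ∈ s, f i ≠ 0) :
    (padicValInt p (∏ i ∈ s, f i) : ℤ) = ∑' e : ℕ, (#{i ∈ s | (p : ℤ) ^ (e + 1) ∣ f i} : ℤ) := by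
  have hprod : ∏ i ∈ s, f i ≠ 0 := prod_ne_zero_iff.2 hf
  rw [tsum_eq_sum (s := range (padicValInt p (∏ i ∈ s, f i)))]
  · exact_mod_cast padicValInt_prod_eq_sum_card s hf le_rfl
  intro e he
  simp only [mem_range, not_lt] at he
  rw [Nat.cast_eq_zero, card_eq_zero, filter_eq_empty_iff]
  intro i hi hdvd
  have := (pow_succ_dvd_iff_lt_padicValInt hprod e).1 (hdvd.trans (dvd_prod_of_mem f hi))
  omega

end padicValInt

theorem padicVal_prod_linear_general (m n u v : ℤ) (p : ℕ) (hp : p.Prime)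
    (hm : 0 < m) (hmn : m < n)
    (hpn : Int.gcd (p : ℤ) n = 1) (huv : u ≤ v)
    (k : ℕ → ℤ)
    (hk : ∀ i : ℕ, 0 < i → 1 ≤ k i ∧ k i ≤ (p : ℤ) ^ i ∧
      k i * n ≡ m [ZMOD ((p : ℤ) ^ i)]) :
    ((padicValInt p (∏ j ∈ Finset.Icc u v, (n * j - m)) : ℤ) =
      ∑' i : ℕ, (⌊((v : ℚ) - (k (i + 1) : ℚ)) / (p : ℚ) ^ (i + 1)⌋ -
        ⌊((u : ℚ) - 1 - (k (i + 1) : ℚ)) / (p : ℚ) ^ (i + 1)⌋)) ∧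
    ((padicValInt p (∏ j ∈ Finset.Icc u v, (n * j - m)) : ℤ) =
      ∑' i : ℕ, (⌊(-(u : ℚ) + (k (i + 1) : ℚ)) / (p : ℚ) ^ (i + 1)⌋ -
        ⌊(-(v : ℚ) - 1 + (k (i + 1) : ℚ)) / (p : ℚ) ^ (i + 1)⌋)) := by
  have := Fact.mk hp
  have hq (i : ℕ) : (0 : ℤ) < (p : ℤ) ^ (i + 1) := pow_pos (by exact_mod_cast hp.pos) _
  have hne : ∀ j ∈ Icc u v, n * j - m ≠ 0 := fun j _ h =>
    absurd (Int.le_of_dvd hm ⟨j, by linarith⟩) (not_le.2 hmn)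
  have hclass (i : ℕ) : #{j ∈ Icc u v | (p : ℤ) ^ (i + 1) ∣ n * j - m} =
      #{j ∈ Icc u v | j ≡ k (i + 1) [ZMOD (p : ℤ) ^ (i + 1)]} :=
    congrArg card <| filter_congr fun j _ => Int.dvd_mul_sub_iff_modEq
      (Int.isCoprime_iff_gcd_eq_one.2 hpn).pow_left (hk (i + 1) i.succ_pos).2.2
  rw [padicValInt_prod_eq_tsum_card _ hne]
  refine ⟨tsum_congr fun i => ?_, tsum_congr fun i => ?_⟩
  · rw [hclass, Int.card_Icc_filter_modEq _ (hq i) (by omega)]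
    push_cast; rfl
  · rw [hclass, Int.card_Icc_filter_modEq_neg, Int.card_Icc_filter_modEq _ (hq i) (by omega)]
    push_cast; ring_nf

/-- Let `m, n, u, v` be integers and `p` a prime with `0 < m < n`,
`gcd(m,n) = gcd(p,n) = 1` and `u ≤ v`. For each `i ≥ 1` let `k_i` be the
unique integer with `1 ≤ k_i ≤ p^i` and `k_i·n ≡ m (mod p^i)`. Then
`v_p(∏_{j=u}^{v} (nj − m)) = ∑_{i≥1} (⌊(v − k_i)/p^i⌋ − ⌊(u − 1 − k_i)/p^i⌋)
= ∑_{i≥1} (⌊(−u + k_i)/p^i⌋ − ⌊(−v − 1 + k_i)/p^i⌋)`. -/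
theorem padicVal_prod_linear (m n u v : ℤ) (p : ℕ) (hp : p.Prime)
    (hm : 0 < m) (hmn : m < n) (hgcd : Int.gcd m n = 1)
    (hpn : Int.gcd (p : ℤ) n = 1) (huv : u ≤ v)
    (k : ℕ → ℤ)
    (hk : ∀ i : ℕ, 0 < i → 1 ≤ k i ∧ k i ≤ (p : ℤ) ^ i ∧
      k i * n ≡ m [ZMOD ((p : ℤ) ^ i)]) :
    ((padicValInt p (∏ j ∈ Finset.Icc u v, (n * j - m)) : ℤ) =
      ∑' i : ℕ, (⌊((v : ℚ) - (k (i + 1) : ℚ)) / (p : ℚ) ^ (i + 1)⌋ -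
        ⌊((u : ℚ) - 1 - (k (i + 1) : ℚ)) / (p : ℚ) ^ (i + 1)⌋)) ∧
    ((padicValInt p (∏ j ∈ Finset.Icc u v, (n * j - m)) : ℤ) =
      ∑' i : ℕ, (⌊(-(u : ℚ) + (k (i + 1) : ℚ)) / (p : ℚ) ^ (i + 1)⌋ -
        ⌊(-(v : ℚ) - 1 + (k (i + 1) : ℚ)) / (p : ℚ) ^ (i + 1)⌋)) :=
  padicVal_prod_linear_general m n u v p hp hm hmn hpn huv k hk
end

section
/- Let m, n, r be positive integers with 0 < m < n and gcd(m, n) = 1, and let p be a prime. Then v_p(D_{m,n,r}) is at most the number of positive integers i for which there exists a positive integer l_i with gcd(l_i, n) = 1 and l_i·p^i ≡ −m (mod n) such that (l_i·p^i + m)/n ≤ (r mod p^i) ≤ ((n − l_i)·p^i − m − n)/n, where r mod p^i denotes the remainder of r upon division by p^i. Furthermore, every positive integer i for which such an l_i exists satisfies p^i ≤ nr. -/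
/-!
The `h`-th coefficient of `Y_{m,n,r}` is `C(r,h) ∏_{r-h<j≤r} (jn+m) / ∏_{1≤j≤h} (jn-m)`, and
`D_{m,n,r}` is the lcm of the denominators of these coefficients. Count, for each prime power
`q = p^i`, the factors divisible by `q`. If `p ∣ n` no denominator factor is divisible by `p`.
Otherwise let `a ≡ m/n (mod q)`: `q ∣ jn - m` iff `j ≡ a` and `q ∣ jn + m` iff `j ≡ -a`, so the
interval `[1,h]` contains at most one more `j ≡ a` than `(r-h, r]` contains `j ≡ -a`, plus the
carry of `h + (r-h)` at `q` (which is the contribution of `C(r,h)` by Kummer). The extra one occurs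
only when `0 < a ≤ r mod q < q - a`, and then `l = (na - m)/q` satisfies the conditions of the
theorem.
-/

open Polynomial in
/-- The hypergeometric polynomial
`Y_{m,n,r}(z) = ₂F₁(−r, −r−m/n; 1−m/n; z)
  = ∑_{h=0}^{r} C(r,h) · (∏_{i=r−h+1}^{r} (in+m))/(∏_{i=1}^{h} (in−m)) · z^h`. -/
noncomputable def hyperY (m n r : ℕ) : Polynomial ℚ :=
  ∑ h ∈ Finset.range (r + 1),
    C ((r.choose h : ℚ) *
        (∏ i ∈ Finset.Icc (r - h + 1) r, ((i : ℚ) * n + m)) /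
        (∏ i ∈ Finset.Icc 1 h, ((i : ℚ) * n - m))) * X ^ h

open Polynomial in
/-- The hypergeometric polynomial
`X_{m,n,r}(z) = z^r·₂F₁(−r, −r−m/n; 1−m/n; 1/z)
  = ∑_{h=0}^{r} C(r,h) · (∏_{i=r−h+1}^{r} (in+m))/(∏_{i=1}^{h} (in−m)) · z^{r−h}`. -/
noncomputable def hyperX (m n r : ℕ) : Polynomial ℚ :=
  ∑ h ∈ Finset.range (r + 1),
    C ((r.choose h : ℚ) *
        (∏ i ∈ Finset.Icc (r - h + 1) r, ((i : ℚ) * n + m)) /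
        (∏ i ∈ Finset.Icc 1 h, ((i : ℚ) * n - m))) * X ^ (r - h)

/-- `D_{m,n,r}`: the smallest positive integer `D` such that `D·Y_{m,n,r}`
has integer coefficients. -/
noncomputable def hyperD (m n r : ℕ) : ℕ :=
  sInf {D : ℕ | 0 < D ∧ ∀ h : ℕ, ((D : ℚ) * (hyperY m n r).coeff h).den = 1}

open Finset

theorem add_sub_div_eq_div_add_ite {q c : ℕ} (hq : 0 < q) (hc : c ≤ q) (x : ℕ) :
    (x + q - c) / q = x / q + if c ≤ x % q then 1 else 0 := by
  have hx := Nat.div_add_mod x q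
  have hs := Nat.mod_lt x hq
  rw [show x + q - c = (x % q + q - c) + q * (x / q) by omega, Nat.add_mul_div_left _ _ hq]
  split_ifs with h
  · rw [Nat.div_eq_sub_div hq (by omega), Nat.div_eq_of_lt (by omega)]; omega
  · rw [Nat.div_eq_of_lt (by omega)]; omega

theorem card_Ioc_filter_modEq {q c : ℕ} (hq : 0 < q) (hc : c ≤ q) {u v : ℕ} (huv : u ≤ v) :
    #{j ∈ Ioc u v | j ≡ c [MOD q]} = (v + q - c) / q - (u + q - c) / q := by
  have hfloor : ∀ w : ℕ, ⌊((w : ℚ) - c) / q⌋ = ((w + q - c) / q : ℕ) - 1 := by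
    intro w
    have hq' : (q : ℚ) ≠ 0 := by positivity
    rw [Int.natCast_div, ← Rat.floor_natCast_div_natCast, ← Int.floor_sub_one,
      Nat.cast_sub (by omega)]
    congr 1
    field_simp
    push_cast
    ring
  have hmono : (u + q - c) / q ≤ (v + q - c) / q := Nat.div_le_div_right (by omega)
  have h := Nat.Ioc_filter_modEq_card u v hq c
  rw [hfloor, hfloor, sub_sub_sub_cancel_right, ← Nat.cast_sub hmono,
    max_eq_left (by positivity)] at h
  exact_mod_cast h

theorem card_Ioc_filter_modEq_le {q a : ℕ} (hq : 0 < q) (ha : a < q) (x y : ℕ) :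
    #{j ∈ Ioc 0 x | j ≡ a [MOD q]} ≤ #{j ∈ Ioc y (x + y) | j ≡ q - a [MOD q]}
      + (if q ≤ x % q + y % q then 1 else 0)
      + (if 0 < a ∧ a ≤ (x + y) % q ∧ (x + y) % q + a < q then 1 else 0) := by
  rw [card_Ioc_filter_modEq hq ha.le (Nat.zero_le x),
    card_Ioc_filter_modEq hq (Nat.sub_le q a) (Nat.le_add_left y x),
    add_sub_div_eq_div_add_ite hq ha.le, add_sub_div_eq_div_add_ite hq ha.le,
    add_sub_div_eq_div_add_ite hq (Nat.sub_le q a), add_sub_div_eq_div_add_ite hq (Nat.sub_le q a),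
    Nat.add_div hq, Nat.add_mod_eq_ite, Nat.zero_div, Nat.zero_mod]
  have := Nat.mod_lt x hq
  have := Nat.mod_lt y hq
  split_ifs <;> omega

theorem padicValNat_prod_eq_sum_card {ι : Type*} {p B : ℕ} [hp : Fact p.Prime] {s : Finset ι}
    {f : ι → ℕ} (hf : ∀ j ∈ s, 0 < f j ∧ f j < p ^ B) :
    padicValNat p (∏ j ∈ s, f j) = ∑ i ∈ Ico 1 B, #{j ∈ s | p ^ i ∣ f j} := by
  rw [← Nat.factorization_def _ hp.out, Nat.factorization_prod_apply fun j hj => (hf j hj).1.ne',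
    sum_congr rfl fun j hj =>
      Nat.factorization_eq_card_pow_dvd_of_lt hp.out (hf j hj).1 (hf j hj).2]
  simp only [card_filter]
  exact sum_comm

theorem padicValNat_den_natCast_div_le {p N D : ℕ} [hp : Fact p.Prime] (hN : N ≠ 0)
    (hD : D ≠ 0) :
    padicValNat p ((N : ℚ) / D).den ≤ padicValNat p D - padicValNat p N := by
  rw [Rat.natCast_div_eq_divInt, Rat.den_divInt, if_neg (by exact_mod_cast hD), Int.natAbs_natCast,
    Int.gcd_natCast_natCast, padicValNat.div_of_dvd (Nat.gcd_dvd_left D N),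
    ← Nat.factorization_def _ hp.out, ← Nat.factorization_def _ hp.out,
    ← Nat.factorization_def _ hp.out, Nat.factorization_gcd hD hN]
  simp only [Finsupp.inf_apply]
  omega

theorem natCast_mul_den_eq_one_iff {D : ℕ} (q : ℚ) :
    ((D : ℚ) * q).den = 1 ↔ q.den ∣ D := by
  have hq : (D : ℚ) * q = ((D * q.num : ℤ) : ℚ) / ((q.den : ℤ) : ℚ) := by
    push_cast; rw [mul_div_assoc, Rat.num_div_den]
  have hcop : IsCoprime (q.den : ℤ) q.num := by
    rw [Int.isCoprime_iff_gcd_eq_one]; exact q.reduced.symm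
  rw [hq, Rat.den_div_intCast_eq_one_iff _ _ (by exact_mod_cast q.den_nz)]
  exact ⟨fun h => Int.natCast_dvd_natCast.mp (hcop.dvd_of_dvd_mul_right h),
    fun h => (Int.natCast_dvd_natCast.mpr h).mul_right _⟩

-- `a` is the residue of `m/n` modulo `q`; the paper's `l` is `(n a - m) / q`.
def IsExceptionalLevel (m n r q : ℕ) : Prop :=
  ∃ a, 0 < a ∧ n * a ≡ m [MOD q] ∧ a ≤ r % q ∧ r % q + a < q

theorem IsExceptionalLevel.exists_cofactor {m n r q : ℕ} (hmn : m < n) (hg : Nat.Coprime m n)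
    (hexc : IsExceptionalLevel m n r q) :
    ∃ l : ℕ, 0 < l ∧ Nat.Coprime l n ∧ n ∣ (l * q + m) ∧
      ((l * q + m : ℕ) : ℚ) / (n : ℚ) ≤ ((r % q : ℕ) : ℚ) ∧
      ((r % q : ℕ) : ℚ) ≤ (((n : ℚ) - (l : ℚ)) * (q : ℚ) - m - n) / n := by
  obtain ⟨a, ha, hna, har, hra⟩ := hexc
  have hman : m < n * a := hmn.trans_le (Nat.le_mul_of_pos_right n ha)
  obtain ⟨l, hl⟩ : q ∣ n * a - m := (Nat.modEq_iff_dvd' hman.le).mp hna.symm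
  have hlq : l * q + m = n * a := by rw [mul_comm, ← hl]; omega
  have hl0 : 0 < l := Nat.pos_of_ne_zero fun h0 => by simp [h0] at hl; omega
  have hn : (0 : ℚ) < n := by exact_mod_cast (Nat.zero_le m).trans_lt hmn
  refine ⟨l, hl0, ?_, ⟨a, by rw [hlq]⟩, ?_, ?_⟩
  · have hdvd_n := Nat.gcd_dvd_right l n
    have hdvd_m : Nat.gcd l n ∣ m := (Nat.dvd_add_right ((Nat.gcd_dvd_left l n).mul_right q)).mp
      (hlq ▸ hdvd_n.mul_right a)
    exact Nat.eq_one_of_dvd_coprimes hg hdvd_m hdvd_n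
  · rw [hlq, Nat.cast_mul, mul_div_cancel_left₀ _ hn.ne']
    exact_mod_cast har
  · rw [le_div_iff₀ hn]
    have hlqQ : (l : ℚ) * q + m = n * a := by exact_mod_cast hlq
    have hraQ : ((r % q : ℕ) : ℚ) + a + 1 ≤ q := by exact_mod_cast hra
    nlinarith

open scoped Classical in
theorem card_filter_dvd_mul_sub_le {m n r h q : ℕ} [NeZero q] (hqn : q.Coprime n) (hmn : m ≤ n)
    (hh : h ≤ r) :
    #{j ∈ Icc 1 h | q ∣ j * n - m} ≤ #{j ∈ Ioc (r - h) r | q ∣ j * n + m}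
      + (if q ≤ h % q + (r - h) % q then 1 else 0)
      + (if IsExceptionalLevel m n r q then 1 else 0) := by
  have hu : IsUnit (n : ZMod q) := (ZMod.isUnit_iff_coprime n q).mpr hqn.symm
  obtain ⟨a, haq, ha⟩ : ∃ a < q, (n : ZMod q) * a = m := by
    refine ⟨((m : ZMod q) * (n : ZMod q)⁻¹).val, ZMod.val_lt _, ?_⟩
    rw [ZMod.natCast_val, ZMod.cast_id', id, mul_comm, mul_assoc, ZMod.inv_mul_of_unit _ hu,
      mul_one]
  have hsub : ∀ j ∈ Icc 1 h, q ∣ j * n - m ↔ j ≡ a [MOD q] := by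
    intro j hj
    have hjn : m ≤ j * n := hmn.trans (Nat.le_mul_of_pos_left n (mem_Icc.mp hj).1)
    rw [← ZMod.natCast_eq_natCast_iff, ← ZMod.natCast_eq_zero_iff, Nat.cast_sub hjn,
      sub_eq_zero, ← ha]
    push_cast
    rw [mul_comm, hu.mul_right_inj]
  have hadd : ∀ j ∈ Ioc (r - h) r, q ∣ j * n + m ↔ j ≡ q - a [MOD q] := by
    intro j _
    rw [← ZMod.natCast_eq_natCast_iff, ← ZMod.natCast_eq_zero_iff, Nat.cast_sub haq.le,
      ZMod.natCast_self, zero_sub]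
    push_cast
    rw [← ha, mul_comm, ← mul_add, hu.mul_right_eq_zero, add_eq_zero_iff_eq_neg]
  have hexc : (0 < a ∧ a ≤ (h + (r - h)) % q ∧ (h + (r - h)) % q + a < q) →
      IsExceptionalLevel m n r q := by
    rw [Nat.add_sub_cancel' hh]
    rintro ⟨ha0, hle, hlt⟩
    exact ⟨a, ha0, (ZMod.natCast_eq_natCast_iff _ _ _).mp (by push_cast; exact ha), hle, hlt⟩
  rw [filter_congr hsub, filter_congr hadd, show Icc 1 h = Ioc 0 h from Icc_add_one_left_eq_Ioc 0 h]
  calc _ ≤ _ := card_Ioc_filter_modEq_le (NeZero.pos q) haq h (r - h)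
    _ ≤ _ := by
      rw [Nat.add_sub_cancel' hh]
      gcongr
      split_ifs <;> simp_all

def hyperNum (m n r h : ℕ) : ℕ := r.choose h * ∏ j ∈ Ioc (r - h) r, (j * n + m)

def hyperDen (m n h : ℕ) : ℕ := ∏ j ∈ Icc 1 h, (j * n - m)

theorem mul_sub_pos {m n j : ℕ} (hmn : m < n) (hj : 1 ≤ j) : 0 < j * n - m :=
  Nat.sub_pos_of_lt (hmn.trans_le (Nat.le_mul_of_pos_left n hj))

theorem hyperNum_pos {m n r h : ℕ} (hm : 0 < m) (hh : h ≤ r) : 0 < hyperNum m n r h :=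
  Nat.mul_pos (Nat.choose_pos hh) (prod_pos fun _ _ => Nat.add_pos_right _ hm)

theorem hyperDen_pos {m n h : ℕ} (hmn : m < n) : 0 < hyperDen m n h :=
  prod_pos fun _ hj => mul_sub_pos hmn (mem_Icc.mp hj).1

theorem hyperY_coeff (m n r h : ℕ) : (hyperY m n r).coeff h =
    if h ∈ range (r + 1) then
      (r.choose h : ℚ) * (∏ i ∈ Icc (r - h + 1) r, ((i : ℚ) * n + m)) /
        (∏ i ∈ Icc 1 h, ((i : ℚ) * n - m))
    else 0 := by
  simp only [hyperY, Polynomial.finsetSum_coeff, Polynomial.coeff_C_mul_X_pow, sum_ite_eq]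

theorem hyperY_coeff_of_le {m n r h : ℕ} (hmn : m < n) (hh : h ≤ r) :
    (hyperY m n r).coeff h = (hyperNum m n r h : ℚ) / hyperDen m n h := by
  have hden : (hyperDen m n h : ℚ) = ∏ j ∈ Icc 1 h, ((j : ℚ) * n - m) := by
    rw [hyperDen, Nat.cast_prod]
    refine prod_congr rfl fun j hj => ?_
    rw [Nat.cast_sub (Nat.lt_of_sub_pos (mul_sub_pos hmn (mem_Icc.mp hj).1)).le, Nat.cast_mul]
  rw [hyperY_coeff, if_pos (mem_range_succ_iff.mpr hh), Icc_add_one_left_eq_Ioc, hden, hyperNum]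
  push_cast
  rfl

theorem hyperD_eq_lcm (m n r : ℕ) :
    hyperD m n r = (range (r + 1)).lcm fun h => ((hyperY m n r).coeff h).den := by
  set L := (range (r + 1)).lcm fun h => ((hyperY m n r).coeff h).den
  have hL : 0 < L := Nat.pos_of_ne_zero fun h0 => by
    obtain ⟨h, -, hh⟩ := Finset.lcm_eq_zero_iff.mp h0
    exact Rat.den_nz _ hh
  have hmem : ∀ D : ℕ,
      (0 < D ∧ ∀ h, ((D : ℚ) * (hyperY m n r).coeff h).den = 1) ↔ 0 < D ∧ L ∣ D := by
    intro D
    simp only [natCast_mul_den_eq_one_iff, L, Finset.lcm_dvd_iff]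
    refine and_congr_right fun _ => ⟨fun h k _ => h k, fun h k => ?_⟩
    by_cases hk : k ∈ range (r + 1)
    · exact h k hk
    · simp [hyperY_coeff, hk]
  refine le_antisymm (Nat.sInf_le ((hmem L).mpr ⟨hL, dvd_rfl⟩))
    (le_csInf ⟨L, (hmem L).mpr ⟨hL, dvd_rfl⟩⟩ fun D hD => ?_)
  obtain ⟨hD0, hLD⟩ := (hmem D).mp hD
  exact Nat.le_of_dvd hD0 hLD

theorem padicValNat_hyperDen_eq_zero {m n h p : ℕ} [hp : Fact p.Prime] (hmn : m < n)
    (hg : Nat.Coprime m n) (hpn : p ∣ n) : padicValNat p (hyperDen m n h) = 0 := by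
  refine padicValNat.eq_zero_of_not_dvd fun hdvd => ?_
  obtain ⟨j, hj, hpj⟩ := (Prime.dvd_finsetProd_iff hp.out.prime _).mp hdvd
  have hjn : m ≤ j * n := (Nat.lt_of_sub_pos (mul_sub_pos hmn (mem_Icc.mp hj).1)).le
  have hpm : p ∣ m := by
    simpa [Nat.sub_sub_self hjn] using Nat.dvd_sub (hpn.mul_left j) hpj
  exact hp.out.one_lt.ne' (Nat.eq_one_of_dvd_coprimes hg hpm hpn)

open scoped Classical in
theorem padicValNat_hyperDen_le {m n r h p B : ℕ} [hp : Fact p.Prime] (hm : 0 < m)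
    (hmn : m < n) (hg : Nat.Coprime m n) (hh : h ≤ r) (hB : n * (r + 1) < p ^ B) :
    padicValNat p (hyperDen m n h) ≤ padicValNat p (hyperNum m n r h)
      + #{i ∈ Ico 1 B | IsExceptionalLevel m n r (p ^ i)} := by
  by_cases hpn : p ∣ n
  · rw [padicValNat_hyperDen_eq_zero hmn hg hpn]
    exact Nat.zero_le _
  have hlt : ∀ j ≤ r, j * n + m < p ^ B := by
    intro j hj
    nlinarith
  have hden : padicValNat p (hyperDen m n h)
      = ∑ i ∈ Ico 1 B, #{j ∈ Icc 1 h | p ^ i ∣ j * n - m} :=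
    padicValNat_prod_eq_sum_card fun j hj => ⟨mul_sub_pos hmn (mem_Icc.mp hj).1,
      (Nat.sub_le _ m).trans_lt ((Nat.le_add_right _ m).trans_lt
        (hlt j ((mem_Icc.mp hj).2.trans hh)))⟩
  have hnum : padicValNat p (∏ j ∈ Ioc (r - h) r, (j * n + m))
      = ∑ i ∈ Ico 1 B, #{j ∈ Ioc (r - h) r | p ^ i ∣ j * n + m} :=
    padicValNat_prod_eq_sum_card fun j hj => ⟨Nat.add_pos_right _ hm, hlt j (mem_Ioc.mp hj).2⟩
  have hchoose : padicValNat p (r.choose h)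
      = #{i ∈ Ico 1 B | p ^ i ≤ h % p ^ i + (r - h) % p ^ i} :=
    padicValNat_choose hh ((Nat.log_mono_right (by nlinarith)).trans_lt
      (Nat.log_lt_of_lt_pow (Nat.mul_pos (by omega) r.succ_pos).ne' hB))
  have hcop : ∀ i, (p ^ i).Coprime n :=
    fun i => ((Nat.Prime.coprime_iff_not_dvd hp.out).mpr hpn).pow_left i
  rw [hyperNum, padicValNat.mul (Nat.choose_pos hh).ne'
      (prod_pos fun _ _ => Nat.add_pos_right _ hm).ne',
    hden, hnum, hchoose, card_filter, card_filter, ← sum_add_distrib, ← sum_add_distrib]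
  refine sum_le_sum fun i _ => ?_
  have := card_filter_dvd_mul_sub_le (q := p ^ i) (r := r) (hcop i) hmn.le hh
  omega

open scoped Classical in
theorem padicValNat_den_hyperY_coeff_le {m n r p B : ℕ} [Fact p.Prime] (hm : 0 < m)
    (hmn : m < n) (hg : Nat.Coprime m n) (hB : n * (r + 1) < p ^ B) (h : ℕ) :
    padicValNat p ((hyperY m n r).coeff h).den
      ≤ #{i ∈ Ico 1 B | IsExceptionalLevel m n r (p ^ i)} := by
  by_cases hh : h ≤ r
  · rw [hyperY_coeff_of_le hmn hh]
    have := padicValNat_hyperDen_le hm hmn hg hh hB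
    have := padicValNat_den_natCast_div_le (p := p) (hyperNum_pos (n := n) hm hh).ne'
      (hyperDen_pos (h := h) hmn).ne'
    omega
  · simp [hyperY_coeff, hh]

open scoped Classical in
theorem padicValNat_hyperD_le_card {m n r p B : ℕ} [hp : Fact p.Prime] (hm : 0 < m)
    (hmn : m < n) (hg : Nat.Coprime m n) (hB : n * (r + 1) < p ^ B) :
    padicValNat p (hyperD m n r) ≤ #{i ∈ Ico 1 B | IsExceptionalLevel m n r (p ^ i)} := by
  rw [hyperD_eq_lcm, ← Nat.factorization_def _ hp.out,
    Finset.factorization_lcm fun _ _ => Rat.den_nz _]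
  refine Finset.sup_le fun h _ => ?_
  rw [Nat.factorization_def _ hp.out]
  exact padicValNat_den_hyperY_coeff_le hm hmn hg hB h

theorem pow_le_mul_of_cast_div_le {l q m n r : ℕ} (hl : 0 < l) (hn : 0 < n)
    (hle : ((l * q + m : ℕ) : ℚ) / (n : ℚ) ≤ ((r % q : ℕ) : ℚ)) : q ≤ n * r := by
  rw [div_le_iff₀ (by exact_mod_cast hn)] at hle
  have hle' : l * q + m ≤ r % q * n := by exact_mod_cast hle
  nlinarith [Nat.mod_le r q]

theorem padicValNat_hyperD_le_general (m n r : ℕ) (hm : 0 < m) (hmn : m < n)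
    (hg : Nat.gcd m n = 1) (p : ℕ) (hp : p.Prime) :
    padicValNat p (hyperD m n r) ≤
      {i : ℕ | 0 < i ∧ ∃ l : ℕ, 0 < l ∧ Nat.gcd l n = 1 ∧ n ∣ (l * p ^ i + m) ∧
        ((l * p ^ i + m : ℕ) : ℚ) / (n : ℚ) ≤ ((r % p ^ i : ℕ) : ℚ) ∧
        ((r % p ^ i : ℕ) : ℚ) ≤ (((n : ℚ) - (l : ℚ)) * (p : ℚ) ^ i - m - n) / n}.ncard ∧
    ∀ i : ℕ, 0 < i →
      (∃ l : ℕ, 0 < l ∧ Nat.gcd l n = 1 ∧ n ∣ (l * p ^ i + m) ∧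
        ((l * p ^ i + m : ℕ) : ℚ) / (n : ℚ) ≤ ((r % p ^ i : ℕ) : ℚ) ∧
        ((r % p ^ i : ℕ) : ℚ) ≤ (((n : ℚ) - (l : ℚ)) * (p : ℚ) ^ i - m - n) / n) →
      p ^ i ≤ n * r := by
  classical
  have := Fact.mk hp
  have hn : 0 < n := hm.trans hmn
  refine ⟨?_, fun i _ ⟨l, hl, _, _, hle, _⟩ => pow_le_mul_of_cast_div_le hl hn hle⟩
  have hB : n * (r + 1) < p ^ (n * (r + 1)) := Nat.lt_pow_self hp.one_lt
  refine (padicValNat_hyperD_le_card hm hmn hg hB).trans ?_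
  rw [← Set.ncard_coe_finset]
  refine Set.ncard_le_ncard (fun i hi => ?_) ((Set.finite_Iic (n * r)).subset ?_)
  · obtain ⟨hi, hexc⟩ := mem_filter.mp (mem_coe.mp hi)
    exact ⟨(mem_Ico.mp hi).1, by simpa only [Nat.cast_pow] using hexc.exists_cofactor hmn hg⟩
  · rintro i ⟨-, l, hl, -, -, hle, -⟩
    exact (Nat.lt_pow_self hp.one_lt).le.trans (pow_le_mul_of_cast_div_le hl hn hle)

/-- **Proposition 1.** The power to which a prime `p` divides `D_{m,n,r}` is at most
the number of positive integers `i` for which there exists a positive integer `l`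
with `gcd(l,n) = 1`, `l·p^i ≡ −m (mod n)` and
`(l·p^i + m)/n ≤ (r mod p^i) ≤ ((n − l)·p^i − m − n)/n`; moreover every such `i`
satisfies `p^i ≤ nr`. -/
theorem padicValNat_hyperD_le (m n r : ℕ) (hm : 0 < m) (hmn : m < n)
    (hg : Nat.gcd m n = 1) (hr : 0 < r) (p : ℕ) (hp : p.Prime) :
    padicValNat p (hyperD m n r) ≤
      {i : ℕ | 0 < i ∧ ∃ l : ℕ, 0 < l ∧ Nat.gcd l n = 1 ∧ n ∣ (l * p ^ i + m) ∧
        ((l * p ^ i + m : ℕ) : ℚ) / (n : ℚ) ≤ ((r % p ^ i : ℕ) : ℚ) ∧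
        ((r % p ^ i : ℕ) : ℚ) ≤ (((n : ℚ) - (l : ℚ)) * (p : ℚ) ^ i - m - n) / n}.ncard ∧
    ∀ i : ℕ, 0 < i →
      (∃ l : ℕ, 0 < l ∧ Nat.gcd l n = 1 ∧ n ∣ (l * p ^ i + m) ∧
        ((l * p ^ i + m : ℕ) : ℚ) / (n : ℚ) ≤ ((r % p ^ i : ℕ) : ℚ) ∧
        ((r % p ^ i : ℕ) : ℚ) ≤ (((n : ℚ) - (l : ℚ)) * (p : ℚ) ^ i - m - n) / n) →
      p ^ i ≤ n * r :=
  padicValNat_hyperD_le_general m n r hm hmn hg p hp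
end

section
/- Let m, n, r be positive integers with 0 < m < n and gcd(m, n) = 1. If a prime p divides D_{m,n,r}, then v_p(D_{m,n,r}) ≤ ⌊log(nr)/log p⌋. -/
/-!
`D_{m,n,r}` is the lcm of the denominators of the coefficients `C(r,h) A_h / B_h` of `Y_{m,n,r}`,
where `A_h = ∏_{i=r-h+1}^{r} (in+m)` and `B_h = ∏_{i=1}^{h} (in-m)`, so it suffices to show
`v_p(B_h) ≤ v_p(A_h) + ⌊log_p(nr)⌋`. If `p ∣ n`, then `p ∤ in - m` because `gcd(m, n) = 1`.
Otherwise, for each `k` the indices `i` with `p^k ∣ in ∓ m` form a single residue class mod `p^k`,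
so the `h` consecutive indices of `B_h` contain at most `⌊h/p^k⌋ + 1` of them and those of `A_h`
at least `⌊h/p^k⌋`. Counting `v_p` as the number of `k` with `p^k` dividing, and noting that the
factors of `B_h` are at most `nr`, so that only `k ≤ ⌊log_p(nr)⌋` contribute, gives the bound.
-/

open Finset

theorem Rat.den_natCast_mul_eq_one_iff (D : ℕ) (x : ℚ) : ((D : ℚ) * x).den = 1 ↔ x.den ∣ D := by
  have hx : (D : ℚ) * x = ((D * x.num : ℤ) : ℚ) / ((x.den : ℤ) : ℚ) := by
    push_cast
    rw [mul_div_assoc, Rat.num_div_den]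
  rw [hx, Rat.den_div_intCast_eq_one_iff _ _ (by exact_mod_cast x.den_nz)]
  constructor
  · intro h
    have := Int.natAbs_dvd_natAbs.mpr h
    rw [Int.natAbs_mul, Int.natAbs_natCast, Int.natAbs_natCast] at this
    exact x.reduced.symm.dvd_of_dvd_mul_right this
  · intro h
    exact Dvd.dvd.mul_right (Int.natCast_dvd_natCast.mpr h) _

theorem Rat.padicValNat_den_le_of_neg_le_padicValRat {p : ℕ} [hp : Fact p.Prime] {x : ℚ} {K : ℕ}
    (hx : -(K : ℤ) ≤ padicValRat p x) : padicValNat p x.den ≤ K := by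
  by_cases hd : p ∣ x.den
  · have hnum : ¬ p ∣ x.num.natAbs := fun hn =>
      hp.out.one_lt.ne' (Nat.dvd_one.mp (x.reduced ▸ Nat.dvd_gcd hn hd))
    rw [padicValRat_def, padicValInt, padicValNat.eq_zero_of_not_dvd hnum] at hx
    omega
  · rw [padicValNat.eq_zero_of_not_dvd hd]
    exact K.zero_le

theorem Polynomial.sInf_natCast_mul_coeff_den_eq_one (P : Polynomial ℚ) :
    sInf {D : ℕ | 0 < D ∧ ∀ h, ((D : ℚ) * P.coeff h).den = 1} =
      P.support.lcm fun h => (P.coeff h).den := by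
  set L := P.support.lcm fun h => (P.coeff h).den
  have hL : 0 < L := Nat.pos_of_ne_zero <| by simp [L, Finset.lcm_eq_zero_iff]
  have hS : {D : ℕ | 0 < D ∧ ∀ h, ((D : ℚ) * P.coeff h).den = 1} = {D | 0 < D ∧ L ∣ D} := by
    ext D
    simp only [Set.mem_ofPred_eq, Rat.den_natCast_mul_eq_one_iff, L, Finset.lcm_dvd_iff]
    refine and_congr_right fun _ => ⟨fun h i _ => h i, fun h i => ?_⟩
    by_cases hi : i ∈ P.support
    · exact h i hi
    · simp [Polynomial.notMem_support_iff.mp hi]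
  rw [hS]
  exact le_antisymm (Nat.sInf_le ⟨hL, dvd_rfl⟩)
    (le_csInf ⟨L, hL, dvd_rfl⟩ fun D ⟨hD, hLD⟩ => Nat.le_of_dvd hD hLD)

theorem padicValNat_finset_lcm_le {ι : Type*} {p : ℕ} (hp : p.Prime) {s : Finset ι} {f : ι → ℕ}
    (hf : ∀ i ∈ s, f i ≠ 0) {K : ℕ} (hK : ∀ i ∈ s, padicValNat p (f i) ≤ K) :
    padicValNat p (s.lcm f) ≤ K := by
  rw [← Nat.factorization_def _ hp, Finset.factorization_lcm hf]
  exact Finset.sup_le fun i hi => (Nat.factorization_def _ hp).symm ▸ hK i hi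

theorem padicValNat_finset_prod {ι : Type*} {p : ℕ} (hp : p.Prime) {s : Finset ι} {f : ι → ℕ}
    (hf : ∀ i ∈ s, f i ≠ 0) : padicValNat p (∏ i ∈ s, f i) = ∑ i ∈ s, padicValNat p (f i) := by
  rw [← Nat.factorization_def _ hp, Nat.factorization_prod hf, Finsupp.finsetSum_apply]
  exact Finset.sum_congr rfl fun i _ => Nat.factorization_def _ hp

theorem card_filter_pow_dvd_eq_min {p : ℕ} [Fact p.Prime] {x : ℕ} (hx : x ≠ 0) (K : ℕ) :
    #{k ∈ Icc 1 K | p ^ k ∣ x} = min K (padicValNat p x) := by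
  have : {k ∈ Icc 1 K | p ^ k ∣ x} = Icc 1 (min K (padicValNat p x)) := by
    ext k
    simp [padicValNat_dvd_iff_le hx, and_assoc]
  simp [this]

theorem sum_card_filter_pow_dvd {ι : Type*} {p : ℕ} [Fact p.Prime] {s : Finset ι} {f : ι → ℕ}
    (hf : ∀ i ∈ s, f i ≠ 0) (K : ℕ) :
    ∑ k ∈ Icc 1 K, #{i ∈ s | p ^ k ∣ f i} = ∑ i ∈ s, min K (padicValNat p (f i)) := by
  simp only [card_filter]
  rw [Finset.sum_comm]
  exact Finset.sum_congr rfl fun i hi => by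
    rw [← card_filter_pow_dvd_eq_min (hf i hi), card_filter]

theorem Nat.card_filter_modEq_Ico_add_le {q : ℕ} (hq : 0 < q) (a h v : ℕ) :
    #{x ∈ Ico a (a + h) | x ≡ v [MOD q]} ≤ h / q + 1 := by
  have := Nat.Ico_filter_modEq_card a (a + h) hq v
  zify
  rw [this]
  refine max_le ?_ (by positivity)
  have e : ((a + h : ℕ) - (v : ℚ)) / q = (a - v) / q + (h : ℚ) / q := by push_cast; ring
  rw [e]
  have h1 := Int.ceil_add_le (((a : ℚ) - v) / q) ((h : ℚ) / q)
  have h2 := Int.ceil_le_floor_add_one ((h : ℚ) / q)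
  rw [Rat.floor_natCast_div_natCast] at h2
  linarith

theorem Nat.div_le_card_filter_modEq_Ico_add {q : ℕ} (hq : 0 < q) (a h v : ℕ) :
    h / q ≤ #{x ∈ Ico a (a + h) | x ≡ v [MOD q]} := by
  have := Nat.Ico_filter_modEq_card a (a + h) hq v
  zify
  rw [this]
  refine le_max_of_le_left ?_
  have e : ((a + h : ℕ) - (v : ℚ)) / q = (a - v) / q + (h : ℚ) / q := by push_cast; ring
  rw [e]
  have h1 : ⌈((a : ℚ) - v) / q + ((h / q : ℕ) : ℤ)⌉ ≤ ⌈((a : ℚ) - v) / q + (h : ℚ) / q⌉ := by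
    apply Int.ceil_mono
    have := Int.floor_le ((h : ℚ) / q)
    rw [Rat.floor_natCast_div_natCast] at this
    push_cast at this ⊢
    linarith
  rw [Int.ceil_add_intCast] at h1
  push_cast at h1 ⊢
  linarith

theorem Nat.exists_dvd_mul_add_iff_modEq {n q : ℕ} [NeZero q] (hn : n.Coprime q) (c : ℤ) :
    ∃ v : ℕ, ∀ i : ℕ, (q : ℤ) ∣ i * n + c ↔ i ≡ v [MOD q] := by
  let u := ZMod.unitOfCoprime n hn
  refine ⟨((-c : ZMod q) * ↑u⁻¹).val, fun i => ?_⟩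
  rw [← ZMod.natCast_eq_natCast_iff, ZMod.natCast_zmod_val, Units.eq_mul_inv_iff_mul_eq,
    ← ZMod.intCast_zmod_eq_zero_iff_dvd, ZMod.coe_unitOfCoprime, eq_neg_iff_add_eq_zero]
  push_cast
  rfl

theorem card_Icc_filter_dvd_mul_sub_le {n q : ℕ} (hq : 0 < q) (hn : n.Coprime q) {m : ℕ}
    (hmn : m ≤ n) (h : ℕ) : #{i ∈ Icc 1 h | q ∣ i * n - m} ≤ h / q + 1 := by
  have : NeZero q := ⟨hq.ne'⟩
  obtain ⟨v, hv⟩ := Nat.exists_dvd_mul_add_iff_modEq hn (-m)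
  calc #{i ∈ Icc 1 h | q ∣ i * n - m} = #{i ∈ Ico 1 (1 + h) | i ≡ v [MOD q]} := by
        rw [add_comm, Finset.Ico_add_one_right_eq_Icc]
        refine congrArg card (filter_congr fun i hi => ?_)
        have : m ≤ i * n := hmn.trans (Nat.le_mul_of_pos_left n (mem_Icc.mp hi).1)
        rw [← hv, ← Int.natCast_dvd_natCast, Nat.cast_sub this]
        push_cast
        rfl
    _ ≤ h / q + 1 := Nat.card_filter_modEq_Ico_add_le hq 1 h v

theorem div_le_card_Icc_filter_dvd_mul_add {n q : ℕ} (hq : 0 < q) (hn : n.Coprime q) (m a h : ℕ) :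
    h / q ≤ #{i ∈ Icc (a + 1) (a + h) | q ∣ i * n + m} := by
  have : NeZero q := ⟨hq.ne'⟩
  obtain ⟨v, hv⟩ := Nat.exists_dvd_mul_add_iff_modEq hn m
  calc h / q ≤ #{i ∈ Ico (a + 1) (a + 1 + h) | i ≡ v [MOD q]} :=
        Nat.div_le_card_filter_modEq_Ico_add hq (a + 1) h v
    _ = #{i ∈ Icc (a + 1) (a + h) | q ∣ i * n + m} := by
        rw [add_right_comm, Finset.Ico_add_one_right_eq_Icc]
        refine congrArg card (filter_congr fun i _ => ?_)
        rw [← hv, ← Int.natCast_dvd_natCast]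
        push_cast
        rfl

theorem padicValNat_prod_mul_sub_le {p n m r h : ℕ} (hp : p.Prime) (hmn : m < n)
    (hg : m.gcd n = 1) (hh : h ≤ r) :
    padicValNat p (∏ i ∈ Icc 1 h, (i * n - m)) ≤
      padicValNat p (∏ i ∈ Icc (r - h + 1) r, (i * n + m)) + Nat.log p (n * r) := by
  have := Fact.mk hp
  have hmi : ∀ i ∈ Icc 1 h, m < i * n := fun i hi =>
    hmn.trans_le (Nat.le_mul_of_pos_left n (mem_Icc.mp hi).1)
  have hB : ∀ i ∈ Icc 1 h, i * n - m ≠ 0 := fun i hi => Nat.sub_ne_zero_of_lt (hmi i hi)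
  have hA : ∀ i ∈ Icc (r - h + 1) r, i * n + m ≠ 0 := fun i hi =>
    (Nat.add_pos_left (Nat.mul_pos (by grind) (by omega)) m).ne'
  rw [padicValNat_finset_prod hp hB, padicValNat_finset_prod hp hA]
  by_cases hpn : p ∣ n
  · have hpB : ∀ i ∈ Icc 1 h, ¬ p ∣ i * n - m := fun i hi hpi => by
      have hpm : p ∣ m := (Nat.dvd_sub_iff_right (hmi i hi).le (hpn.mul_left i)).mp hpi
      exact hp.not_dvd_one (hg ▸ Nat.dvd_gcd hpm hpn)
    rw [sum_eq_zero fun i hi => padicValNat.eq_zero_of_not_dvd (hpB i hi)]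
    exact Nat.zero_le _
  set K := Nat.log p (n * r)
  have hBK : ∀ i ∈ Icc 1 h, padicValNat p (i * n - m) ≤ K := fun i hi =>
    padicValNat_le_nat_log _ |>.trans <| Nat.log_mono_right <|
      (Nat.sub_le _ _).trans (by rw [mul_comm n]; gcongr; exact (mem_Icc.mp hi).2.trans hh)
  have hcount : ∀ k ∈ Icc 1 K, #{i ∈ Icc 1 h | p ^ k ∣ i * n - m} ≤
      #{i ∈ Icc (r - h + 1) r | p ^ k ∣ i * n + m} + 1 := fun k _ => by
    have hq : 0 < p ^ k := pow_pos hp.pos k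
    have hcop : n.Coprime (p ^ k) := ((hp.coprime_iff_not_dvd.mpr hpn).symm).pow_right k
    have := div_le_card_Icc_filter_dvd_mul_add hq hcop m (r - h) h
    rw [Nat.sub_add_cancel hh] at this
    have := card_Icc_filter_dvd_mul_sub_le hq hcop hmn.le h
    omega
  calc ∑ i ∈ Icc 1 h, padicValNat p (i * n - m)
      = ∑ i ∈ Icc 1 h, min K (padicValNat p (i * n - m)) :=
        sum_congr rfl fun i hi => (min_eq_right (hBK i hi)).symm
    _ = ∑ k ∈ Icc 1 K, #{i ∈ Icc 1 h | p ^ k ∣ i * n - m} := (sum_card_filter_pow_dvd hB K).symm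
    _ ≤ ∑ k ∈ Icc 1 K, (#{i ∈ Icc (r - h + 1) r | p ^ k ∣ i * n + m} + 1) := sum_le_sum hcount
    _ = ∑ i ∈ Icc (r - h + 1) r, min K (padicValNat p (i * n + m)) + K := by
        rw [sum_add_distrib, sum_card_filter_pow_dvd hA]
        simp
    _ ≤ ∑ i ∈ Icc (r - h + 1) r, padicValNat p (i * n + m) + K := by
        gcongr
        exact min_le_right _ _

theorem coeff_hyperY {m n : ℕ} (hmn : m < n) (r h : ℕ) :
    (hyperY m n r).coeff h =
      if h ≤ r then
        ((r.choose h * ∏ i ∈ Icc (r - h + 1) r, (i * n + m) : ℕ) : ℚ) /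
          ((∏ i ∈ Icc 1 h, (i * n - m) : ℕ) : ℚ)
      else 0 := by
  simp only [hyperY, Polynomial.finsetSum_coeff, Polynomial.coeff_C_mul, Polynomial.coeff_X_pow,
    mul_ite, mul_one, mul_zero, Finset.sum_ite_eq, mem_range, Nat.lt_succ_iff]
  refine if_congr Iff.rfl ?_ rfl
  have hsub : ∀ i ∈ Icc 1 h, (((i * n - m : ℕ)) : ℚ) = (i : ℚ) * n - m := fun i hi => by
    rw [Nat.cast_sub (hmn.le.trans (Nat.le_mul_of_pos_left n (mem_Icc.mp hi).1))]
    push_cast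
    rfl
  rw [Nat.cast_prod, prod_congr rfl hsub]
  push_cast
  rfl

theorem padicValNat_den_coeff_hyperY_le {p m n : ℕ} (hp : p.Prime) (hmn : m < n)
    (hg : m.gcd n = 1) (r h : ℕ) :
    padicValNat p ((hyperY m n r).coeff h).den ≤ Nat.log p (n * r) := by
  have := Fact.mk hp
  rw [coeff_hyperY hmn]
  split_ifs with hh
  · have hAB := padicValNat_prod_mul_sub_le hp hmn hg hh
    set A := ∏ i ∈ Icc (r - h + 1) r, (i * n + m)
    set B := ∏ i ∈ Icc 1 h, (i * n - m)
    have hA : A ≠ 0 := prod_ne_zero_iff.mpr fun i hi =>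
      (Nat.add_pos_left (Nat.mul_pos (by grind) (by omega)) m).ne'
    have hB : B ≠ 0 := prod_ne_zero_iff.mpr fun i hi =>
      Nat.sub_ne_zero_of_lt (hmn.trans_le (Nat.le_mul_of_pos_left n (mem_Icc.mp hi).1))
    have hC : r.choose h ≠ 0 := (Nat.choose_pos hh).ne'
    apply Rat.padicValNat_den_le_of_neg_le_padicValRat
    rw [padicValRat.div (by simp [hA, hC]) (by simpa using hB), padicValRat.of_nat,
      padicValRat.of_nat, padicValNat.mul hC hA]
    omega
  · simp

theorem padicValNat_hyperD_le_log_general (m n r : ℕ) (hmn : m < n)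
    (hg : Nat.gcd m n = 1) (p : ℕ) (hp : p.Prime) :
    (padicValNat p (hyperD m n r) : ℤ) ≤
      ⌊Real.log ((n : ℝ) * (r : ℝ)) / Real.log (p : ℝ)⌋ := by
  rw [Real.log_div_log, ← Nat.cast_mul, Real.floor_logb_natCast (Nat.cast_nonneg _),
    Int.log_natCast, Nat.cast_le, hyperD, Polynomial.sInf_natCast_mul_coeff_den_eq_one]
  exact padicValNat_finset_lcm_le hp (fun h _ => Rat.den_nz _) fun h _ =>
    padicValNat_den_coeff_hyperY_le hp hmn hg r h

/-- **Lemma 2(a).** If a prime `p` divides `D_{m,n,r}`, then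
`v_p(D_{m,n,r}) ≤ ⌊log(nr)/log p⌋`. -/
theorem padicValNat_hyperD_le_log (m n r : ℕ) (hm : 0 < m) (hmn : m < n)
    (hg : Nat.gcd m n = 1) (hr : 0 < r) (p : ℕ) (hp : p.Prime)
    (hdvd : p ∣ hyperD m n r) :
    (padicValNat p (hyperD m n r) : ℤ) ≤
      ⌊Real.log ((n : ℝ) * (r : ℝ)) / Real.log (p : ℝ)⌋ :=
  padicValNat_hyperD_le_log_general m n r hmn hg p hp
end

section
/- Let m, n, r be positive integers with gcd(m, n) = 1 and m ≤ n/2, and let z be a real number with 0 ≤ z ≤ 1. Then (1 + z)^r ≤ Y_{m,n,r}(z) ≤ (1 + z^{1/2})^{2r}. -/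
open Finset Polynomial

theorem Finset.sum_range_two_mul {M : Type*} [AddCommMonoid M] (f : ℕ → M) (N : ℕ) :
    ∑ k ∈ range (2 * N), f k = ∑ h ∈ range N, (f (2 * h) + f (2 * h + 1)) := by
  induction N with
  | zero => simp
  | succ N ih => rw [Nat.mul_succ, sum_range_succ, sum_range_succ, sum_range_succ, ih, add_assoc]

theorem two_mul_sum_choose_mul_pow_two_mul {R : Type*} [CommRing R] (x : R) (r : ℕ) :
    2 * ∑ h ∈ range (r + 1), ((2 * r + 1).choose (2 * h) : R) * x ^ (2 * h) =
      (1 + x) ^ (2 * r + 1) + (1 - x) ^ (2 * r + 1) := by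
  rw [sub_eq_add_neg, add_comm 1 x, add_comm 1 (-x), add_pow, add_pow, ← sum_add_distrib,
    show 2 * r + 1 + 1 = 2 * (r + 1) by ring, sum_range_two_mul, mul_sum]
  refine sum_congr rfl fun h _ => ?_
  simp only [one_pow, mul_one, (even_two_mul h).neg_pow, (odd_two_mul_add_one h).neg_pow]
  ring

theorem sum_choose_mul_pow_two_mul_le {R : Type*} [CommRing R] [LinearOrder R]
    [IsStrictOrderedRing R] {x : R} (hx0 : 0 ≤ x) (hx1 : x ≤ 1) (r : ℕ) :
    ∑ h ∈ range (r + 1), ((2 * r + 1).choose (2 * h) : R) * x ^ (2 * h) ≤ (1 + x) ^ (2 * r) := by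
  have key : (1 - x) ^ (2 * r + 1) ≤ (1 - x) * (1 + x) ^ (2 * r) := by
    rw [pow_succ']
    gcongr
    linarith
  have := two_mul_sum_choose_mul_pow_two_mul x r
  rw [pow_succ'] at this
  linarith

theorem choose_mul_prod_Icc_two_mul_add_one {r h : ℕ} (hh : h ≤ r) :
    (r.choose h : ℚ) * ∏ i ∈ Icc (r - h + 1) r, (2 * (i : ℚ) + 1) =
      (2 * r + 1).choose (2 * h) * ∏ i ∈ Icc 1 h, (2 * (i : ℚ) - 1) := by
  induction h with
  | zero => simp
  | succ h ih =>
    have ih := ih (by omega)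
    have hP : ∏ i ∈ Icc (r - (h + 1) + 1) r, (2 * (i : ℚ) + 1) =
        (2 * ((r : ℚ) - h) + 1) * ∏ i ∈ Icc (r - h + 1) r, (2 * (i : ℚ) + 1) := by
      rw [show r - (h + 1) + 1 = r - h by omega, ← insert_Icc_add_one_left_eq_Icc (by omega),
        prod_insert (by simp)]
      push_cast [Nat.cast_sub (show h ≤ r by omega)]
      ring
    have hQ : ∏ i ∈ Icc 1 (h + 1), (2 * (i : ℚ) - 1) =
        (∏ i ∈ Icc 1 h, (2 * (i : ℚ) - 1)) * (2 * h + 1) := by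
      rw [prod_Icc_succ_top (by omega)]
      push_cast
      ring
    have e1 := Nat.choose_succ_right_eq r h
    have e2 := Nat.choose_succ_right_eq (2 * r + 1) (2 * h)
    have e3 := Nat.choose_succ_right_eq (2 * r + 1) (2 * h + 1)
    rw [show 2 * (h + 1) = 2 * h + 1 + 1 by ring, hP, hQ]
    qify [show h ≤ r by omega, show 2 * h ≤ 2 * r + 1 by omega,
      show 2 * h + 1 ≤ 2 * r + 1 by omega] at e1 e2 e3
    set P := ∏ i ∈ Icc (r - h + 1) r, (2 * (i : ℚ) + 1)
    set Q := ∏ i ∈ Icc 1 h, (2 * (i : ℚ) - 1)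
    -- both sides `x_h` satisfy `(h + 1) * x_(h+1) = (r - h) * (2 * (r - h) + 1) * x_h`
    apply mul_left_cancel₀ (show (h : ℚ) + 1 ≠ 0 by positivity)
    linear_combination (2 * ((r : ℚ) - h) + 1) * P * e1
      + ((r : ℚ) - h) * (2 * ((r : ℚ) - h) + 1) * ih
      - (2 * (h : ℚ) + 1) * Q / 2 * e3 - ((r : ℚ) - h) * Q * e2

theorem prod_mul_add_le_pow_mul_prod {m n : ℕ} (hmn : 2 * m ≤ n) (s : Finset ℕ) :
    ∏ i ∈ s, ((i : ℚ) * n + m) ≤ ((n : ℚ) / 2) ^ #s * ∏ i ∈ s, (2 * (i : ℚ) + 1) := by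
  rw [← prod_const, ← prod_mul_distrib]
  refine prod_le_prod (fun i _ => by positivity) fun i _ => ?_
  qify at hmn
  linarith

theorem pow_mul_prod_le_prod_mul_sub {m n : ℕ} (hmn : 2 * m ≤ n) {s : Finset ℕ}
    (hs : ∀ i ∈ s, 1 ≤ i) :
    ((n : ℚ) / 2) ^ #s * ∏ i ∈ s, (2 * (i : ℚ) - 1) ≤ ∏ i ∈ s, ((i : ℚ) * n - m) := by
  rw [← prod_const, ← prod_mul_distrib]
  refine prod_le_prod (fun i hi => ?_) fun i _ => ?_
  · have : (1 : ℚ) ≤ i := by exact_mod_cast hs i hi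
    have : (0 : ℚ) ≤ n := by positivity
    nlinarith
  · qify at hmn
    linarith

theorem prod_Icc_mul_sub_pos {m n : ℕ} (hmn : m < n) (h : ℕ) :
    0 < ∏ i ∈ Icc 1 h, ((i : ℚ) * n - m) := by
  refine prod_pos fun i hi => ?_
  have : n ≤ i * n := Nat.le_mul_of_pos_left n (mem_Icc.mp hi).1
  qify at hmn this
  linarith

theorem prod_Icc_mul_sub_le_prod_Icc_mul_add {m n r h : ℕ} (hmn : m ≤ n) (hh : h ≤ r) :
    ∏ i ∈ Icc 1 h, ((i : ℚ) * n - m) ≤ ∏ i ∈ Icc (r - h + 1) r, ((i : ℚ) * n + m) := by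
  rw [show Icc (r - h + 1) r = (Icc 1 h).map (addRightEmbedding (r - h)) by
    rw [map_add_right_Icc]; congr 1 <;> omega, prod_map]
  refine prod_le_prod (fun i hi => ?_) fun i _ => ?_
  · have : n ≤ i * n := Nat.le_mul_of_pos_left n (mem_Icc.mp hi).1
    qify at hmn this
    linarith
  · have : (0 : ℚ) ≤ (r - h : ℕ) * n := by positivity
    simp only [addRightEmbedding_apply, Nat.cast_add]
    linarith

def hyperYCoeff (m n r h : ℕ) : ℚ :=
  (r.choose h : ℚ) * (∏ i ∈ Icc (r - h + 1) r, ((i : ℚ) * n + m)) /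
    (∏ i ∈ Icc 1 h, ((i : ℚ) * n - m))

theorem aeval_hyperY (m n r : ℕ) (z : ℝ) :
    aeval z (hyperY m n r) = ∑ h ∈ range (r + 1), (hyperYCoeff m n r h : ℝ) * z ^ h := by
  simp only [hyperY, map_sum, map_mul, map_pow, aeval_C, aeval_X, eq_ratCast]
  rfl

theorem choose_le_hyperYCoeff {m n r h : ℕ} (hmn : m < n) (hh : h ≤ r) :
    (r.choose h : ℚ) ≤ hyperYCoeff m n r h := by
  rw [hyperYCoeff, le_div_iff₀ (prod_Icc_mul_sub_pos hmn h)]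
  gcongr
  exact prod_Icc_mul_sub_le_prod_Icc_mul_add hmn.le hh

theorem hyperYCoeff_le_choose {m n r h : ℕ} (hn : 0 < n) (hmn : 2 * m ≤ n) (hh : h ≤ r) :
    hyperYCoeff m n r h ≤ (2 * r + 1).choose (2 * h) := by
  rw [hyperYCoeff, div_le_iff₀ (prod_Icc_mul_sub_pos (by omega) h)]
  have hcard : #(Icc (r - h + 1) r) = h := by simp only [Nat.card_Icc]; omega
  calc (r.choose h : ℚ) * ∏ i ∈ Icc (r - h + 1) r, ((i : ℚ) * n + m)
      ≤ r.choose h * (((n : ℚ) / 2) ^ h * ∏ i ∈ Icc (r - h + 1) r, (2 * (i : ℚ) + 1)) := by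
        gcongr
        simpa only [hcard] using prod_mul_add_le_pow_mul_prod hmn (Icc (r - h + 1) r)
    _ = (2 * r + 1).choose (2 * h) * (((n : ℚ) / 2) ^ h * ∏ i ∈ Icc 1 h, (2 * (i : ℚ) - 1)) := by
        rw [mul_left_comm, choose_mul_prod_Icc_two_mul_add_one hh, mul_left_comm]
    _ ≤ (2 * r + 1).choose (2 * h) * ∏ i ∈ Icc 1 h, ((i : ℚ) * n - m) := by
        gcongr
        simpa using pow_mul_prod_le_prod_mul_sub hmn (s := Icc 1 h) fun i hi => (mem_Icc.mp hi).1

theorem one_add_pow_le_aeval_hyperY {m n : ℕ} (hmn : m < n) (r : ℕ) {z : ℝ} (hz : 0 ≤ z) :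
    (1 + z) ^ r ≤ aeval z (hyperY m n r) := by
  calc (1 + z) ^ r = ∑ h ∈ range (r + 1), (r.choose h : ℝ) * z ^ h := by
        rw [add_comm, add_pow]
        simp only [one_pow, mul_one, mul_comm]
    _ ≤ aeval z (hyperY m n r) := by
        rw [aeval_hyperY]
        refine sum_le_sum fun h hh => ?_
        gcongr
        exact_mod_cast choose_le_hyperYCoeff hmn (Nat.lt_succ_iff.mp (mem_range.mp hh))

theorem aeval_hyperY_le_one_add_sqrt_pow {m n : ℕ} (hn : 0 < n) (hmn : 2 * m ≤ n) (r : ℕ)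
    {z : ℝ} (hz0 : 0 ≤ z) (hz1 : z ≤ 1) :
    aeval z (hyperY m n r) ≤ (1 + √z) ^ (2 * r) := by
  calc aeval z (hyperY m n r)
      ≤ ∑ h ∈ range (r + 1), ((2 * r + 1).choose (2 * h) : ℝ) * √z ^ (2 * h) := by
        rw [aeval_hyperY]
        refine sum_le_sum fun h hh => ?_
        rw [pow_mul, Real.sq_sqrt hz0]
        gcongr
        exact_mod_cast hyperYCoeff_le_choose hn hmn (Nat.lt_succ_iff.mp (mem_range.mp hh))
    _ ≤ (1 + √z) ^ (2 * r) :=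
        sum_choose_mul_pow_two_mul_le (Real.sqrt_nonneg z) (Real.sqrt_le_one.mpr hz1) r

theorem hyperY_eval_bounds_general (m n r : ℕ) (hn : 0 < n) (hmn : (m : ℝ) ≤ (n : ℝ) / 2)
    (z : ℝ) (hz0 : 0 ≤ z) (hz1 : z ≤ 1) :
    (1 + z) ^ r ≤ Polynomial.aeval z (hyperY m n r) ∧
    Polynomial.aeval z (hyperY m n r) ≤ (1 + z ^ ((1 : ℝ) / 2)) ^ (2 * r) := by
  have h2m : 2 * m ≤ n := by exact_mod_cast (by linarith : (2 * m : ℝ) ≤ n)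
  rw [← Real.sqrt_eq_rpow]
  exact ⟨one_add_pow_le_aeval_hyperY (by omega) r hz0,
    aeval_hyperY_le_one_add_sqrt_pow hn h2m r hz0 hz1⟩

/-- **Lemma 6.** For positive integers `m, n, r` with `gcd(m,n) = 1` and
`m ≤ n/2`, and real `0 ≤ z ≤ 1`: `(1 + z)^r ≤ Y_{m,n,r}(z) ≤ (1 + z^{1/2})^{2r}`. -/
theorem hyperY_eval_bounds (m n r : ℕ) (hm : 0 < m) (hn : 0 < n) (hr : 0 < r)
    (hg : Nat.gcd m n = 1) (hmn : (m : ℝ) ≤ (n : ℝ) / 2)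
    (z : ℝ) (hz0 : 0 ≤ z) (hz1 : z ≤ 1) :
    (1 + z) ^ r ≤ Polynomial.aeval z (hyperY m n r) ∧
    Polynomial.aeval z (hyperY m n r) ≤ (1 + z ^ ((1 : ℝ) / 2)) ^ (2 * r) :=
  hyperY_eval_bounds_general m n r hn hmn z hz0 hz1
end
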